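/- In a serial-dictatorship matching where receivers are processed in a fixed order and each is matched to the most-preferred still-available donor on its eligibility list, the resulting matching is Pareto-optimal for receivers: no other matching makes some receiver strictly better off (with respect to its preference order) without making another receiver strictly worse off. -/

import Mathlib

variable {D : Type} [DecidableEq D]

/-- Donors already used up after the first `i` receivers of the serial
dictatorship have been processed (receiver `i` picks the first donor on its
eligibility/preference list `P i` that is still available). -/
def sdUsed (P : ℕ → List D) : ℕ → Finset D
  | 0 => ∅
  | i + 1 =>
      sdUsed P i ∪ ((P i).find? fun d => decide (d ∉ sdUsed P i)).toFinset

/-- The donor assigned to receiver `i` by serial dictatorship (if any). -/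
def sdMatch (P : ℕ → List D) (i : ℕ) : Option D :=
  (P i).find? fun d => decide (d ∉ sdUsed P i)

/-- Rank of an outcome for a receiver with (strict) preference list `l`:
position in the list for a matched eligible donor; `l.length` (worst) for
being unmatched (or matched outside the list). Smaller rank = better. -/
def outcomeRank (l : List D) : Option D → ℕ
  | none => l.length
  | some d => l.idxOf d

/-!
Suppose a matching of distinct eligible donors weakly improves on serial dictatorship for every
receiver. By strong induction along the priority order it agrees with serial dictatorship: if it
agrees on all earlier receivers, the donor it gives receiver `i` is still available when `i`
chooses, so `i`'s own pick ranks at least as high; weak improvement forces equal ranks, and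
ranks determine eligible outcomes. Hence nobody is strictly better off.
-/

lemma outcomeRank_le_length (l : List D) (o : Option D) : outcomeRank l o ≤ l.length := by
  cases o with
  | none => exact le_rfl
  | some d => exact List.idxOf_le_length

lemma eq_of_outcomeRank_eq {l : List D} {o o' : Option D} (ho : ∀ d ∈ o, d ∈ l)
    (ho' : ∀ d ∈ o', d ∈ l) (h : outcomeRank l o = outcomeRank l o') : o = o' := by
  cases o with
  | none =>
    cases o' with
    | none => rfl
    | some d' => exact absurd h (List.idxOf_lt_length_iff.mpr (ho' d' rfl)).ne'
  | some d =>
    cases o' with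
    | none => exact absurd h (List.idxOf_lt_length_iff.mpr (ho d rfl)).ne
    | some d' => exact congrArg some ((List.idxOf_inj (ho d rfl)).mp h)

lemma outcomeRank_find?_le_idxOf {p : D → Bool} {l : List D} {d : D} (hd : d ∈ l)
    (hpd : p d) : outcomeRank l (l.find? p) ≤ l.idxOf d := by
  cases hfind : l.find? p with
  | none => exact absurd hpd (List.find?_eq_none.mp hfind d hd)
  | some b =>
    obtain ⟨hpb, as, bs, rfl, has⟩ := List.find?_eq_some_iff_append.mp hfind
    have hnot : ∀ x, p x → x ∉ as := fun x hpx hx => by simpa [hpx] using has x hx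
    simp [outcomeRank, List.idxOf_append, hnot b hpb, hnot d hpd]

lemma sdMatch_mem (P : ℕ → List D) (i : ℕ) : ∀ d ∈ sdMatch P i, d ∈ P i :=
  fun _ h => List.mem_of_find?_eq_some h

lemma mem_sdUsed_iff (P : ℕ → List D) (i : ℕ) (d : D) :
    d ∈ sdUsed P i ↔ ∃ j < i, sdMatch P j = some d := by
  induction i with
  | zero => simp [sdUsed]
  | succ k ih =>
    simp only [sdUsed, Finset.mem_union, Option.mem_toFinset, Option.mem_def, ih]
    constructor
    · rintro (⟨j, hj, hm⟩ | hm)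
      · exact ⟨j, by omega, hm⟩
      · exact ⟨k, by omega, hm⟩
    · rintro ⟨j, hj, hm⟩
      rcases Nat.lt_succ_iff_lt_or_eq.mp hj with hj | rfl
      · exact Or.inl ⟨j, hj, hm⟩
      · exact Or.inr hm

lemma outcomeRank_sdMatch_le (P : ℕ → List D) (i : ℕ) {o : Option D}
    (helig : ∀ d ∈ o, d ∈ P i) (hfree : ∀ d ∈ o, d ∉ sdUsed P i) :
    outcomeRank (P i) (sdMatch P i) ≤ outcomeRank (P i) o := by
  cases o with
  | none => exact outcomeRank_le_length _ _
  | some d => exact outcomeRank_find?_le_idxOf (helig d rfl) (by simpa using hfree d rfl)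

lemma eq_sdMatch_of_forall_outcomeRank_le (n : ℕ) (P : ℕ → List D) (M' : ℕ → Option D)
    (hinj : ∀ i j d, i < n → j < n → M' i = some d → M' j = some d → i = j)
    (helig : ∀ i d, i < n → M' i = some d → d ∈ P i)
    (hweak : ∀ i < n, outcomeRank (P i) (M' i) ≤ outcomeRank (P i) (sdMatch P i)) :
    ∀ i < n, M' i = sdMatch P i := by
  intro i
  induction i using Nat.strong_induction_on with
  | _ i ih =>
    intro hi
    have hfree : ∀ d ∈ M' i, d ∉ sdUsed P i := by
      intro d hd hused
      obtain ⟨j, hj, hjd⟩ := (mem_sdUsed_iff P i d).mp hused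
      have hMj : M' j = some d := (ih j hj (hj.trans hi)).trans hjd
      exact hj.ne (hinj j i d (hj.trans hi) hi hMj hd)
    have hsd := outcomeRank_sdMatch_le P i (helig i · hi) hfree
    exact eq_of_outcomeRank_eq (helig i · hi) (sdMatch_mem P i) ((hweak i hi).antisymm hsd)

theorem serial_dictatorship_pareto_optimal_general
    (n : ℕ) (P : ℕ → List D)
    (M' : ℕ → Option D)
    (hinj : ∀ i j d, i < n → j < n → M' i = some d → M' j = some d → i = j)
    (helig : ∀ i d, i < n → M' i = some d → d ∈ P i) :
    ¬ ((∀ i < n, outcomeRank (P i) (M' i) ≤ outcomeRank (P i) (sdMatch P i)) ∧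
       (∃ i < n, outcomeRank (P i) (M' i) < outcomeRank (P i) (sdMatch P i))) := by
  rintro ⟨hweak, i, hi, hstrict⟩
  rw [eq_sdMatch_of_forall_outcomeRank_le n P M' hinj helig hweak i hi] at hstrict
  exact lt_irrefl _ hstrict

/-- The serial-dictatorship matching is Pareto-optimal for
receivers: no other matching `M'` (assigning distinct eligible donors) makes
every receiver weakly better off and some receiver strictly better off. -/
theorem serial_dictatorship_pareto_optimal
    (n : ℕ) (P : ℕ → List D) (hnodup : ∀ i, (P i).Nodup)
    (M' : ℕ → Option D)
    (hinj : ∀ i j d, i < n → j < n → M' i = some d → M' j = some d → i = j)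
    (helig : ∀ i d, i < n → M' i = some d → d ∈ P i) :
    ¬ ((∀ i < n, outcomeRank (P i) (M' i) ≤ outcomeRank (P i) (sdMatch P i)) ∧
       (∃ i < n, outcomeRank (P i) (M' i) < outcomeRank (P i) (sdMatch P i))) :=
  serial_dictatorship_pareto_optimal_general n P M' hinj helig
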